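/- Fix k, r ∈ ℕ and ζ ∈ ℝ with |ζ| < 1. Let Ē_k^r(ζ) ⊆ M_k(ℂ)³ × M_{k×r}(ℂ) × M_{r×k}(ℂ) be the set of P²-ADHM data at level ζ, with the subspace topology. Then the continuous map ι : Ē_k^r(ζ) → Ē_k^{r+3k}(ζ) sending (a₁,a₂,d,b,c) to (a₁, a₂, d, (b 0 0 0), (c; 0; 0; 0)) — where b is extended by three k×k zero blocks of columns and c by three k×k zero blocks of rows — is null-homotopic, i.e. homotopic through continuous maps to a constant map. -/

import Mathlib

open Matrix

/-- The configuration space for P²-ADHM data: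
`M_k(ℂ) × M_k(ℂ) × M_k(ℂ) × M_{k×r}(ℂ) × M_{r×k}(ℂ)`. -/
abbrev ConfP2 (k r : ℕ) :=
  Matrix (Fin k) (Fin k) ℂ × Matrix (Fin k) (Fin k) ℂ × Matrix (Fin k) (Fin k) ℂ ×
    Matrix (Fin k) (Fin r) ℂ × Matrix (Fin r) (Fin k) ℂ

/-- A P²-ADHM datum at level `ζ`, as a point `(a₁, a₂, d, b, c)` of `ConfP2 k r`. -/
def IsP2ADHM {k r : ℕ} (ζ : ℝ) (p : ConfP2 k r) : Prop :=
  p.1 * p.2.2.1 * p.2.1 - p.2.1 * p.2.2.1 * p.1 + p.2.2.2.1 * p.2.2.2.2 = 0 ∧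
  p.1 * p.1ᴴ + p.2.1 * p.2.1ᴴ + p.2.2.2.1 * p.2.2.2.1ᴴ = 1 ∧
  p.2.2.1 * p.1 * (p.2.2.1 * p.1)ᴴ - (p.2.2.1 * p.1)ᴴ * (p.2.2.1 * p.1)
      + p.2.2.1 * p.2.1 * (p.2.2.1 * p.2.1)ᴴ - (p.2.2.1 * p.2.1)ᴴ * (p.2.2.1 * p.2.1)
      - p.1ᴴ * p.1 - p.2.1ᴴ * p.2.1
      + p.2.2.1 * p.2.2.2.1 * (p.2.2.1 * p.2.2.2.1)ᴴ - p.2.2.2.2ᴴ * p.2.2.2.2 + 1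
    = (ζ : ℂ) • (1 : Matrix (Fin k) (Fin k) ℂ)

/-- Extend a `k × r` matrix by `m` zero columns. -/
def extendCols {k r : ℕ} (m : ℕ) (b : Matrix (Fin k) (Fin r) ℂ) :
    Matrix (Fin k) (Fin (r + m)) ℂ :=
  Matrix.of fun i j => if h : (j : ℕ) < r then b i ⟨j, h⟩ else 0

/-- Extend an `r × k` matrix by `m` zero rows. -/
def extendRows {k r : ℕ} (m : ℕ) (c : Matrix (Fin r) (Fin k) ℂ) :
    Matrix (Fin (r + m)) (Fin k) ℂ :=
  Matrix.of fun i j => if h : (i : ℕ) < r then c ⟨i, h⟩ j else 0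

/-- The rank-stabilization map
`(a₁,a₂,d,b,c) ↦ (a₁, a₂, d, (b 0 ⋯ 0), (c; 0; ⋯; 0))`. -/
def extP2 {k r : ℕ} (m : ℕ) (p : ConfP2 k r) : ConfP2 k (r + m) :=
  (p.1, p.2.1, p.2.2.1, extendCols m p.2.2.2.1, extendRows m p.2.2.2.2)

/-!
For fixed `d`, the three defining equations are quadratic in `(a₁, a₂, b, c)`, and appending
columns `b'` to `b` and rows `c'` to `c` adds the "framing moment" `(b'c', b'b'ᴴ, db'(db')ᴴ - c'ᴴc')`
of the new blocks. For `B = (1 0 0)` and `C = (0; √(1 - ζ); dᴴ)` this framing moment is exactly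
`(0, 1, ζ - 1)`, the moment a datum must have: `dBBᴴdᴴ = ddᴴ` is cancelled by the `dᴴ` block of `C`,
which is why three blocks are needed. Hence `(σa₁, σa₂, d, (σb, ρB), (σc; ρC))` is a datum at level
`ζ` whenever `σ² + ρ² = 1`. Rotating `(σ, ρ)` from `(1, 0)` to `(0, 1)` deforms `ι` into
`p ↦ (0, 0, d, B, C)`, and scaling `d` to `0` contracts this to a constant map.
-/

section BlockMatrix

variable {X α l m n₁ n₂ o : Type*}

@[fun_prop]
theorem Continuous.matrix_fromCols [TopologicalSpace X] [TopologicalSpace α]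
    {A : X → Matrix m n₁ α} {B : X → Matrix m n₂ α} (hA : Continuous A) (hB : Continuous B) :
    Continuous fun x => fromCols (A x) (B x) :=
  continuous_matrix fun i j => by
    cases j <;> simp only [fromCols_apply_inl, fromCols_apply_inr] <;> fun_prop

@[fun_prop]
theorem Continuous.matrix_fromRows [TopologicalSpace X] [TopologicalSpace α]
    {A : X → Matrix n₁ m α} {B : X → Matrix n₂ m α} (hA : Continuous A) (hB : Continuous B) :
    Continuous fun x => fromRows (A x) (B x) :=
  continuous_matrix fun i j => by
    cases i <;> simp only [fromRows_apply_inl, fromRows_apply_inr] <;> fun_prop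

theorem Matrix.reindex_fromCols_mul_reindex_fromRows [Fintype n₁] [Fintype n₂] [Fintype o]
    [Semiring α] (e : n₁ ⊕ n₂ ≃ o) (A₁ : Matrix l n₁ α) (A₂ : Matrix l n₂ α)
    (B₁ : Matrix n₁ m α) (B₂ : Matrix n₂ m α) :
    reindex (.refl l) e (fromCols A₁ A₂) * reindex e (.refl m) (fromRows B₁ B₂) =
      A₁ * B₁ + A₂ * B₂ := by
  simp [fromCols_mul_fromRows]

theorem Matrix.mul_mul_conjTranspose_mul [Fintype m] [Fintype n₁] [NonUnitalSemiring α]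
    [StarRing α] (A : Matrix l m α) (B : Matrix m n₁ α) :
    A * B * (A * B)ᴴ = A * (B * Bᴴ) * Aᴴ := by
  simp only [conjTranspose_mul, Matrix.mul_assoc]

end BlockMatrix

noncomputable section

namespace ConfP2

variable {k r : ℕ} {ζ : ℝ}

def moment :
    ConfP2 k r → Matrix (Fin k) (Fin k) ℂ × Matrix (Fin k) (Fin k) ℂ × Matrix (Fin k) (Fin k) ℂ
  | (a₁, a₂, d, b, c) =>
    (a₁ * d * a₂ - a₂ * d * a₁ + b * c,
      a₁ * a₁ᴴ + a₂ * a₂ᴴ + b * bᴴ,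
      d * a₁ * (d * a₁)ᴴ - (d * a₁)ᴴ * (d * a₁) + d * a₂ * (d * a₂)ᴴ - (d * a₂)ᴴ * (d * a₂)
        - a₁ᴴ * a₁ - a₂ᴴ * a₂ + d * b * (d * b)ᴴ - cᴴ * c)

def momentLevel (k : ℕ) (ζ : ℝ) :
    Matrix (Fin k) (Fin k) ℂ × Matrix (Fin k) (Fin k) ℂ × Matrix (Fin k) (Fin k) ℂ :=
  (0, 1, (ζ - 1) • 1)

theorem isP2ADHM_iff_moment {p : ConfP2 k r} :
    IsP2ADHM ζ p ↔ moment p = momentLevel k ζ := by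
  obtain ⟨a₁, a₂, d, b, c⟩ := p
  simp only [IsP2ADHM, moment, momentLevel, Prod.mk.injEq, sub_smul, one_smul,
    ← Complex.coe_smul, eq_sub_iff_add_eq]

def stabilize {m : ℕ} (p : ConfP2 k r) (b' : Matrix (Fin k) (Fin m) ℂ)
    (c' : Matrix (Fin m) (Fin k) ℂ) : ConfP2 k (r + m) :=
  (p.1, p.2.1, p.2.2.1, reindex (.refl _) finSumFinEquiv (fromCols p.2.2.2.1 b'),
    reindex finSumFinEquiv (.refl _) (fromRows p.2.2.2.2 c'))

def scale (σ : ℝ) (p : ConfP2 k r) : ConfP2 k r :=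
  (σ • p.1, σ • p.2.1, p.2.2.1, σ • p.2.2.2.1, σ • p.2.2.2.2)

def framingMoment {ι : Type*} [Fintype ι] (d : Matrix (Fin k) (Fin k) ℂ)
    (b : Matrix (Fin k) ι ℂ) (c : Matrix ι (Fin k) ℂ) :
    Matrix (Fin k) (Fin k) ℂ × Matrix (Fin k) (Fin k) ℂ × Matrix (Fin k) (Fin k) ℂ :=
  (b * c, b * bᴴ, d * b * (d * b)ᴴ - cᴴ * c)

theorem extendCols_eq_reindex_fromCols (m : ℕ) (b : Matrix (Fin k) (Fin r) ℂ) :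
    extendCols m b = reindex (.refl _) finSumFinEquiv (fromCols b 0) := by
  ext i j
  refine Fin.addCases (fun j => ?_) (fun j => ?_) j <;> simp [extendCols]

theorem extendRows_eq_reindex_fromRows (m : ℕ) (c : Matrix (Fin r) (Fin k) ℂ) :
    extendRows m c = reindex finSumFinEquiv (.refl _) (fromRows c 0) := by
  ext i j
  refine Fin.addCases (fun i => ?_) (fun i => ?_) i <;> simp [extendRows]

theorem extP2_eq_stabilize (m : ℕ) (p : ConfP2 k r) : extP2 m p = stabilize p 0 0 := by
  simp only [extP2, stabilize, extendCols_eq_reindex_fromCols, extendRows_eq_reindex_fromRows]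

theorem moment_stabilize {m : ℕ} (p : ConfP2 k r) (b' : Matrix (Fin k) (Fin m) ℂ)
    (c' : Matrix (Fin m) (Fin k) ℂ) :
    moment (stabilize p b' c') = moment p + framingMoment p.2.2.1 b' c' := by
  obtain ⟨a₁, a₂, d, b, c⟩ := p
  simp only [moment, stabilize, framingMoment, mul_mul_conjTranspose_mul, conjTranspose_reindex,
    conjTranspose_fromCols_eq_fromRows_conjTranspose,
    conjTranspose_fromRows_eq_fromCols_conjTranspose, reindex_fromCols_mul_reindex_fromRows,
    Prod.mk_add_mk, Prod.mk.injEq, Matrix.mul_add, Matrix.add_mul]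
  exact ⟨by abel, by abel, by abel⟩

theorem moment_scale (σ : ℝ) (p : ConfP2 k r) : moment (scale σ p) = σ ^ 2 • moment p := by
  obtain ⟨a₁, a₂, d, b, c⟩ := p
  simp only [moment, scale, conjTranspose_smul, conjTranspose_mul, star_trivial, Matrix.smul_mul,
    Matrix.mul_smul, smul_smul, ← sq, Prod.smul_mk, smul_add, smul_sub]

theorem framingMoment_smul {ι : Type*} [Fintype ι] (ρ : ℝ) (d : Matrix (Fin k) (Fin k) ℂ)
    (b : Matrix (Fin k) ι ℂ) (c : Matrix ι (Fin k) ℂ) :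
    framingMoment d (ρ • b) (ρ • c) = ρ ^ 2 • framingMoment d b c := by
  simp only [framingMoment, conjTranspose_smul, conjTranspose_mul, star_trivial, Matrix.smul_mul,
    Matrix.mul_smul, smul_smul, ← sq, Prod.smul_mk, smul_sub]

def tripleEquiv (k : ℕ) : Fin k ⊕ (Fin k ⊕ Fin k) ≃ Fin (3 * k) :=
  (Equiv.sumCongr (.refl _) finSumFinEquiv).trans (finSumFinEquiv.trans (finCongr (by ring)))

def frameCols (k : ℕ) : Matrix (Fin k) (Fin (3 * k)) ℂ :=
  reindex (.refl _) (tripleEquiv k) (fromCols 1 0)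

def frameRows (ζ : ℝ) (d : Matrix (Fin k) (Fin k) ℂ) : Matrix (Fin (3 * k)) (Fin k) ℂ :=
  reindex (tripleEquiv k) (.refl _) (fromRows 0 (fromRows (√(1 - ζ) • 1) dᴴ))

def framed (ζ ρ : ℝ) (q : ConfP2 k r) : ConfP2 k (r + 3 * k) :=
  stabilize q (ρ • frameCols k) (ρ • frameRows ζ q.2.2.1)

theorem framingMoment_frame (hζ : ζ ≤ 1) (d : Matrix (Fin k) (Fin k) ℂ) :
    framingMoment d (frameCols k) (frameRows ζ d) = momentLevel k ζ := by
  have hsqrt : √(1 - ζ) * √(1 - ζ) = 1 - ζ := Real.mul_self_sqrt (by linarith)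
  simp only [framingMoment, frameCols, frameRows, momentLevel, mul_mul_conjTranspose_mul,
    conjTranspose_reindex, conjTranspose_fromCols_eq_fromRows_conjTranspose,
    conjTranspose_fromRows_eq_fromCols_conjTranspose, reindex_fromCols_mul_reindex_fromRows,
    fromCols_mul_fromRows, conjTranspose_smul, conjTranspose_one, conjTranspose_zero,
    conjTranspose_conjTranspose, star_trivial, Matrix.mul_smul, smul_smul, hsqrt,
    Matrix.mul_one, Matrix.mul_zero, Matrix.zero_mul, add_zero, zero_add, Prod.mk.injEq]
  refine ⟨trivial, trivial, ?_⟩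
  rw [sub_smul, sub_smul]
  abel

section Continuity

variable {X : Type*} [TopologicalSpace X]

@[fun_prop]
theorem _root_.Continuous.confP2_stabilize {m : ℕ} {p : X → ConfP2 k r}
    {b' : X → Matrix (Fin k) (Fin m) ℂ} {c' : X → Matrix (Fin m) (Fin k) ℂ} (hp : Continuous p)
    (hb' : Continuous b') (hc' : Continuous c') :
    Continuous fun x => stabilize (p x) (b' x) (c' x) := by
  unfold stabilize
  fun_prop

@[fun_prop]
theorem _root_.Continuous.confP2_scale {σ : X → ℝ} {p : X → ConfP2 k r} (hσ : Continuous σ)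
    (hp : Continuous p) : Continuous fun x => scale (σ x) (p x) := by
  unfold scale
  fun_prop

@[fun_prop]
theorem _root_.Continuous.confP2_framed {ρ : X → ℝ} {q : X → ConfP2 k r} (hρ : Continuous ρ) (hq : Continuous q) :
    Continuous fun x => framed ζ (ρ x) (q x) := by
  unfold framed frameRows
  fun_prop

end Continuity

theorem moment_framed_scale (hζ : ζ ≤ 1) (σ ρ : ℝ) (p : ConfP2 k r) :
    moment (framed ζ ρ (scale σ p)) = σ ^ 2 • moment p + ρ ^ 2 • momentLevel k ζ := by
  rw [framed, moment_stabilize, moment_scale, framingMoment_smul, framingMoment_frame hζ]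

theorem isP2ADHM_framed_scale (hζ : ζ ≤ 1) {σ ρ : ℝ} (hσρ : σ ^ 2 + ρ ^ 2 = 1) {p : ConfP2 k r}
    (hp : IsP2ADHM ζ p) : IsP2ADHM ζ (framed ζ ρ (scale σ p)) := by
  rw [isP2ADHM_iff_moment] at hp ⊢
  rw [moment_framed_scale hζ, hp, ← add_smul, hσρ, one_smul]

theorem isP2ADHM_framed_one_scale_zero (hζ : ζ ≤ 1) (p : ConfP2 k r) :
    IsP2ADHM ζ (framed ζ 1 (scale 0 p)) := by
  rw [isP2ADHM_iff_moment, moment_framed_scale hζ]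
  simp

theorem isP2ADHM_extP2 {m : ℕ} {p : ConfP2 k r} (hp : IsP2ADHM ζ p) : IsP2ADHM ζ (extP2 m p) := by
  rw [isP2ADHM_iff_moment] at hp ⊢
  simp [extP2_eq_stabilize, moment_stabilize, framingMoment, hp]

theorem framed_zero_scale_one (p : ConfP2 k r) : framed ζ 0 (scale 1 p) = extP2 (3 * k) p := by
  simp [framed, scale, extP2_eq_stabilize]

end ConfP2

open ConfP2

variable {k r : ℕ} {ζ : ℝ}

def extMap (m : ℕ) (ζ : ℝ) :
    C({p : ConfP2 k r // IsP2ADHM ζ p}, {p : ConfP2 k (r + m) // IsP2ADHM ζ p}) where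
  toFun p := ⟨extP2 m p, isP2ADHM_extP2 p.2⟩
  continuous_toFun := by
    simp only [extP2_eq_stabilize]
    fun_prop

def framedCoreMap (hζ : ζ ≤ 1) :
    C({p : ConfP2 k r // IsP2ADHM ζ p}, {p : ConfP2 k (r + 3 * k) // IsP2ADHM ζ p}) where
  toFun p := ⟨framed ζ 1 (scale 0 p.1), isP2ADHM_framed_one_scale_zero hζ p.1⟩
  continuous_toFun := by fun_prop

theorem extMap_homotopic_framedCoreMap (hζ : ζ ≤ 1) :
    (extMap (r := r) (3 * k) ζ).Homotopic (framedCoreMap hζ) :=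
  ⟨{ toFun := fun x =>
        ⟨framed ζ (Real.sin (Real.pi / 2 * x.1)) (scale (Real.cos (Real.pi / 2 * x.1)) x.2),
          isP2ADHM_framed_scale hζ (Real.cos_sq_add_sin_sq _) x.2.2⟩
     continuous_toFun := by fun_prop
     map_zero_left := fun p => by simp [framed_zero_scale_one, extMap]
     map_one_left := fun p => by simp [framedCoreMap] }⟩

theorem framedCoreMap_homotopic_const (hζ : ζ ≤ 1) :
    (framedCoreMap (k := k) (r := r) hζ).Homotopic
      (.const _ ⟨framed ζ 1 (scale 0 0), isP2ADHM_framed_one_scale_zero hζ 0⟩) :=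
  ⟨{ toFun := fun x => ⟨framed ζ 1 (scale 0 ((1 - x.1 : ℝ) • x.2.1)),
        isP2ADHM_framed_one_scale_zero hζ _⟩
     continuous_toFun := by fun_prop
     map_zero_left := fun p => by simp [framedCoreMap]
     map_one_left := fun p => by simp }⟩

end

/-- For `|ζ| < 1`, the inclusion `Ē_k^r(ζ) → Ē_k^{r+3k}(ζ)`,
`(a₁,a₂,d,b,c) ↦ (a₁,a₂,d,(b 0 0 0),(c;0;0;0))`, of the spaces of P²-ADHM data
at level `ζ` is a well-defined continuous map and is null-homotopic. -/
theorem stmt15 (k r : ℕ) (ζ : ℝ) (hζ : |ζ| < 1) :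
    ∃ f : C({p : ConfP2 k r // IsP2ADHM ζ p}, {p : ConfP2 k (r + 3 * k) // IsP2ADHM ζ p}),
      (∀ p, (f p : ConfP2 k (r + 3 * k)) = extP2 (3 * k) (p : ConfP2 k r)) ∧
      ∃ q, f.Homotopic (ContinuousMap.const _ q) := by
  have hζ₁ : ζ ≤ 1 := (abs_lt.mp hζ).2.le
  exact ⟨extMap (3 * k) ζ, fun _ => rfl, _,
    (extMap_homotopic_framedCoreMap hζ₁).trans (framedCoreMap_homotopic_const hζ₁)⟩
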